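/- arXiv:0709.0248 — 2 statements merged into one kernel-verified Lean document; each statement's English description precedes it below -/
import Mathlib

section
/- Let C be a category with binary products, A an object of C, and Δ : A → A × A the diagonal morphism. Suppose r : A → I and p : I → A × A are morphisms with p ∘ r = Δ. If for every object D, every morphism g : D → I, and every morphism d : A → D with g ∘ d = r there exists a morphism J : I → D with g ∘ J = id_I, then r is an isomorphism (so the object I, mapped to A × A by p, is isomorphic over A × A to the diagonal). In particular, in a locally cartesian closed category any object satisfying the introduction and elimination rules for the identity type of A is isomorphic to the diagonal, so the standard interpretation validates the reflection rule (is extensional). -/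
/-!
STATEMENT 0: Let `C` be a category with binary products, `A` an object, and
`Δ = prod.lift (𝟙 A) (𝟙 A) : A ⟶ A ⨯ A` the diagonal.  Suppose `r : A ⟶ I` and
`p : I ⟶ A ⨯ A` satisfy `r ≫ p = Δ` (formation/introduction), and that for every
object `D`, morphism `g : D ⟶ I` and `d : A ⟶ D` with `d ≫ g = r` there is a
`J : I ⟶ D` with `J ≫ g = 𝟙 I` (elimination).  Then `r` is an isomorphism, i.e.
`I` is isomorphic over `A ⨯ A` to the diagonal, so the interpretation validates
the reflection rule (is extensional).
-/

open CategoryTheory Limits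

theorem identity_object_iso_diagonal
    {C : Type*} [Category C] [HasBinaryProducts C]
    (A I : C) (r : A ⟶ I) (p : I ⟶ A ⨯ A)
    (hfact : r ≫ p = prod.lift (𝟙 A) (𝟙 A))
    (helim : ∀ (D : C) (g : D ⟶ I) (d : A ⟶ D), d ≫ g = r → ∃ J : I ⟶ D, J ≫ g = 𝟙 I) :
    IsIso r := by
  obtain ⟨J, hJ⟩ := helim A r (𝟙 A) (Category.id_comp r)
  have hsplit : r ≫ p ≫ prod.fst = 𝟙 A := by
    rw [← Category.assoc, hfact, prod.lift_fst]
  refine ⟨J, ?_, hJ⟩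
  calc r ≫ J = (r ≫ J) ≫ r ≫ p ≫ prod.fst := by rw [hsplit, Category.comp_id]
    _ = r ≫ (J ≫ r) ≫ p ≫ prod.fst := by simp only [Category.assoc]
    _ = 𝟙 A := by rw [hJ, Category.id_comp, hsplit]
end

section
/- Let C be a model category, A an object, Δ_A = p ∘ r a factorization of the diagonal with r : A → P a trivial cofibration and p : P → A × A a fibration, g : D → P a fibration, and d : A → D a morphism with g ∘ d = r. If J, J' : P → D both satisfy g ∘ J = id_P = g ∘ J' and J ∘ r = d = J' ∘ r, then J and J' are right homotopic: there exists a path object for D, i.e. a factorization of the diagonal Δ_D : D → D × D as a weak equivalence s : D → D^I followed by a fibration q : D^I → D × D, together with a morphism H : P → D^I such that fst ∘ q ∘ H = J and snd ∘ q ∘ H = J'. -/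
open CategoryTheory Limits


/-- A weak factorization system on a category: every map factors as a map in the
left class followed by a map in the right class, and each class is characterized
by the (left, resp. right) lifting property against the other. -/
structure WeakFactorizationSystem {C : Type*} [Category C]
    (L R : CategoryTheory.MorphismProperty C) : Prop where
  factorization : ∀ {X Y : C} (f : X ⟶ Y),
    ∃ (Z : C) (i : X ⟶ Z) (p : Z ⟶ Y), L i ∧ R p ∧ i ≫ p = f
  left_iff : ∀ {X Y : C} (i : X ⟶ Y),
    L i ↔ ∀ {W Z : C} (p : W ⟶ Z), R p → HasLiftingProperty i p
  right_iff : ∀ {X Y : C} (p : X ⟶ Y),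
    R p ↔ ∀ {W Z : C} (i : W ⟶ Z), L i → HasLiftingProperty i p

/-- A (closed) model structure on a bicomplete category `C`: classes of
weak equivalences, fibrations and cofibrations such that weak equivalences
satisfy three-for-two and both (cofibrations, trivial fibrations) and
(trivial cofibrations, fibrations) are weak factorization systems. -/
structure ModelStructure (C : Type*) [Category C] [HasLimits C] [HasColimits C] where
  weq : CategoryTheory.MorphismProperty C
  fib : CategoryTheory.MorphismProperty C
  cof : CategoryTheory.MorphismProperty C
  three_for_two_comp : ∀ {X Y Z : C} (f : X ⟶ Y) (g : Y ⟶ Z),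
    weq f → weq g → weq (f ≫ g)
  three_for_two_left : ∀ {X Y Z : C} (f : X ⟶ Y) (g : Y ⟶ Z),
    weq g → weq (f ≫ g) → weq f
  three_for_two_right : ∀ {X Y Z : C} (f : X ⟶ Y) (g : Y ⟶ Z),
    weq f → weq (f ≫ g) → weq g
  wfs_cof_trivFib :
    WeakFactorizationSystem cof (fun {_ _} p => fib p ∧ weq p)
  wfs_trivCof_fib :
    WeakFactorizationSystem (fun {_ _} i => cof i ∧ weq i) fib

namespace ModelStructure

variable {C : Type*} [Category C] [HasLimits C] [HasColimits C] (M : ModelStructure C)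

lemma hasLiftingProperty_of_trivCof_of_fib {A B X Y : C} {i : A ⟶ B} {p : X ⟶ Y}
    (hi : M.cof i ∧ M.weq i) (hp : M.fib p) : HasLiftingProperty i p :=
  (M.wfs_trivCof_fib.right_iff p).mp hp i hi

lemma exists_lift_prodLift_of_comp_eq {A P D DI : C} {r : A ⟶ P} (hr : M.cof r ∧ M.weq r)
    {s : D ⟶ DI} {q : DI ⟶ D ⨯ D} (hq : M.fib q) (hsq : s ≫ q = prod.lift (𝟙 D) (𝟙 D))
    {J J' : P ⟶ D} (h : r ≫ J = r ≫ J') : ∃ H : P ⟶ DI, H ≫ q = prod.lift J J' := by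
  have := M.hasLiftingProperty_of_trivCof_of_fib hr hq
  have sq : CommSq ((r ≫ J) ≫ s) r q (prod.lift J J') :=
    ⟨by rw [Category.assoc, hsq]; ext <;> simp [h]⟩
  exact ⟨sq.lift, sq.fac_right⟩

end ModelStructure

theorem eliminators_right_homotopic_general
    {C : Type*} [Category C] [HasLimits C] [HasColimits C]
    (M : ModelStructure C) (A P D : C)
    (r : A ⟶ P)
    (hr : M.cof r ∧ M.weq r)
    (d : A ⟶ D)
    (J J' : P ⟶ D)
    (hJr : r ≫ J = d) (hJ'r : r ≫ J' = d) :
    ∃ (DI : C) (s : D ⟶ DI) (q : DI ⟶ D ⨯ D),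
      M.weq s ∧ M.fib q ∧ s ≫ q = prod.lift (𝟙 D) (𝟙 D) ∧
      ∃ H : P ⟶ DI, H ≫ q ≫ prod.fst = J ∧ H ≫ q ≫ prod.snd = J' := by
  obtain ⟨DI, s, q, hs, hq, hsq⟩ :=
    M.wfs_trivCof_fib.factorization (prod.lift (𝟙 D) (𝟙 D))
  obtain ⟨H, hH⟩ := M.exists_lift_prodLift_of_comp_eq hr hq hsq (hJr.trans hJ'r.symm)
  exact ⟨DI, s, q, hs.2, hq, hsq, H, by rw [reassoc_of% hH, prod.lift_fst],
    by rw [reassoc_of% hH, prod.lift_snd]⟩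

theorem eliminators_right_homotopic
    {C : Type*} [Category C] [HasLimits C] [HasColimits C]
    (M : ModelStructure C) (A P D : C)
    (r : A ⟶ P) (p : P ⟶ A ⨯ A)
    (hr : M.cof r ∧ M.weq r) (hp : M.fib p)
    (hfact : r ≫ p = prod.lift (𝟙 A) (𝟙 A))
    (g : D ⟶ P) (hg : M.fib g) (d : A ⟶ D) (hd : d ≫ g = r)
    (J J' : P ⟶ D)
    (hJ : J ≫ g = 𝟙 P) (hJ' : J' ≫ g = 𝟙 P)
    (hJr : r ≫ J = d) (hJ'r : r ≫ J' = d) :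
    ∃ (DI : C) (s : D ⟶ DI) (q : DI ⟶ D ⨯ D),
      M.weq s ∧ M.fib q ∧ s ≫ q = prod.lift (𝟙 D) (𝟙 D) ∧
      ∃ H : P ⟶ DI, H ≫ q ≫ prod.fst = J ∧ H ≫ q ≫ prod.snd = J' :=
  eliminators_right_homotopic_general M A P D r hr d J J' hJr hJ'r
end
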